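/- arXiv:2206.01054 — 3 statements merged into one kernel-verified Lean document; each statement's English description precedes it below -/
import Mathlib

section
/- Let G be a finite group and let x, y be non-identity elements of G with ⟨y⟩ ⊊ ⟨x⟩. If the ≃-class x̂ is of Type II, then |ŷ| < |x̂|. -/
open Subgroup Set

variable (G : Type*) [Group G]

/-- Arc of the directed reduced power graph `→RP(G)`: from `x` to `y` iff `⟨y⟩ ⊊ ⟨x⟩`. -/
def rpArc (x y : G) : Prop := zpowers y < zpowers x

/-- Adjacency in the undirected reduced power graph `RP(G)`:
`x` and `y` are adjacent iff `⟨x⟩ ⊊ ⟨y⟩` or `⟨y⟩ ⊊ ⟨x⟩`. -/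
def rpAdj (x y : G) : Prop := zpowers x < zpowers y ∨ zpowers y < zpowers x

/-- `x ≃ y` iff `x` and `y` have the same neighbourhood in `RP(G)`. -/
def simEq (x y : G) : Prop := ∀ z : G, rpAdj G x z ↔ rpAdj G y z

/-- The `≃`-class `x̂` of `x`. -/
def hatCls (x : G) : Set G := {y | simEq G y x}

/-- The `∼`-class `[x]` of `x`: the set of generators of `⟨x⟩`. -/
def genCls (x : G) : Set G := {y | zpowers y = zpowers x}

/-- The automorphism group of the directed reduced power graph `→RP(G)`,
as a subgroup of the permutations of `G`. -/
def DRPAut : Subgroup (Equiv.Perm G) where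
  carrier := {π | ∀ x y : G, rpArc G (π x) (π y) ↔ rpArc G x y}
  one_mem' := fun _ _ => Iff.rfl
  mul_mem' := by
    intro a b ha hb x y
    simp only [Equiv.Perm.mul_apply]
    exact (ha (b x) (b y)).trans (hb x y)
  inv_mem' := by
    intro a ha x y
    have h := ha (a⁻¹ x) (a⁻¹ y)
    simp only [Equiv.Perm.coe_inv, Equiv.apply_symm_apply] at h
    exact h.symm

/-- The automorphism group of the undirected reduced power graph `RP(G)`,
as a subgroup of the permutations of `G`. -/
def RPAut : Subgroup (Equiv.Perm G) where
  carrier := {π | ∀ x y : G, rpAdj G (π x) (π y) ↔ rpAdj G x y}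
  one_mem' := fun _ _ => Iff.rfl
  mul_mem' := by
    intro a b ha hb x y
    simp only [Equiv.Perm.mul_apply]
    exact (ha (b x) (b y)).trans (hb x y)
  inv_mem' := by
    intro a ha x y
    have h := ha (a⁻¹ x) (a⁻¹ y)
    simp only [Equiv.Perm.coe_inv, Equiv.apply_symm_apply] at h
    exact h.symm

/-- `⟨x⟩` is a maximal cyclic subgroup of `G`. -/
def IsMaxCyc (x : G) : Prop := ∀ y : G, zpowers x ≤ zpowers y → zpowers x = zpowers y

/-- The `≃`-class of `x` is of Type I: it is a single `∼`-class, `x̂ = [x]`. -/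
def TypeI (x : G) : Prop := hatCls G x = genCls G x

/-- The `≃`-class of `x` is of Type II: it is a union of `r ≥ 2` `∼`-classes whose
cyclic subgroups are distinct maximal cyclic subgroups of `G`, all of the same order. -/
def TypeII (x : G) : Prop :=
  (∃ y z : G, simEq G y x ∧ simEq G z x ∧ zpowers y ≠ zpowers z) ∧
  ∀ y : G, simEq G y x → IsMaxCyc G y ∧ orderOf y = orderOf x

/-- The `≃`-class of `x` is of Type III: `G` is non-cyclic, the class is a union of
`r ≥ 2` `∼`-classes whose cyclic subgroups are maximal cyclic subgroups of prime order,
and at least two distinct orders occur. -/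
def TypeIII (x : G) : Prop :=
  ¬ IsCyclic G ∧
  (∃ y z : G, simEq G y x ∧ simEq G z x ∧ orderOf y ≠ orderOf z) ∧
  ∀ y : G, simEq G y x → IsMaxCyc G y ∧ (orderOf y).Prime

/-- The `≃`-class of `x` is of Type IV with parameter `(p, q)`: it is a union of exactly
two `∼`-classes of elements of distinct prime orders `p` and `q`, the corresponding cyclic
subgroups being non-maximal when `G` is non-cyclic, and maximal when `G` is cyclic. -/
def TypeIV (x : G) (p q : ℕ) : Prop :=
  p.Prime ∧ q.Prime ∧ p ≠ q ∧
  (∃ x₁ x₂ : G, simEq G x₁ x ∧ simEq G x₂ x ∧ orderOf x₁ = p ∧ orderOf x₂ = q ∧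
     ∀ y : G, simEq G y x → zpowers y = zpowers x₁ ∨ zpowers y = zpowers x₂) ∧
  ((¬ IsCyclic G ∧ ∀ y : G, simEq G y x → ¬ IsMaxCyc G y) ∨
   (IsCyclic G ∧ ∀ y : G, simEq G y x → IsMaxCyc G y))

/-- A `P(G)`-permutation: a permutation `σ` of `G` preserving element orders, mapping each
`∼`-class `[x]` onto `[x^σ]`, and preserving inclusion and non-inclusion of cyclic subgroups. -/
def IsPPerm (σ : Equiv.Perm G) : Prop :=
  (∀ x : G, orderOf (σ x) = orderOf x) ∧
  (∀ x : G, σ '' genCls G x = genCls G (σ x)) ∧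
  (∀ x y : G, zpowers y ≤ zpowers x ↔ zpowers (σ y) ≤ zpowers (σ x))

/-- A permutation of `G` fixing every `≃`-class setwise. -/
def FixesClasses (τ : Equiv.Perm G) : Prop := ∀ x : G, simEq G (τ x) x

/-!
Let `m = o(x)`. As `⟨x⟩` is a maximal cyclic subgroup and every `w ∈ ŷ` is adjacent to `x`, the
class `ŷ` lies in the cyclic group `⟨x⟩`, where a subgroup is determined by its order. Two elements
of `ŷ` of different orders `k ≠ e` are not adjacent, so `k ∤ e` and `e ∤ k`, while every proper
divisor of either divides the other; this forces `k` and `e` to be primes. Hence `|ŷ|` is at most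
`φ(e) ≤ φ(m)` if only one order `e` occurs, and at most `∑ (p - 1) < 2 ∏ (p - 1) ≤ 2 φ(m)` over a
set of at least two primes `p ∣ m` otherwise. On the other side, `x̂` contains two disjoint
`∼`-classes of generators of cyclic groups of order `m`, so `|x̂| ≥ 2 φ(m)`.
-/

lemma isPrimePow_of_forall_proper_dvd {k e : ℕ} (hke : ¬ k ∣ e)
    (hk : ∀ d, d ∣ k → d ≠ k → d ∣ e) : IsPrimePow k := by
  by_contra hpow
  refine hke ((Nat.dvd_iff_prime_pow_dvd_dvd e k).2 fun p j hp hpj => ?_)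
  rcases eq_or_ne (p ^ j) k with hj | hj
  · rcases j.eq_zero_or_pos with rfl | hj0
    · simp
    · exact absurd ((isPrimePow_nat_iff k).2 ⟨p, j, hp, hj0, hj⟩) hpow
  · exact hk _ hpj hj

lemma prime_of_forall_proper_dvd {k e : ℕ} (hke : ¬ k ∣ e) (hek : ¬ e ∣ k)
    (hk : ∀ d, d ∣ k → d ≠ k → d ∣ e) (he : ∀ d, d ∣ e → d ≠ e → d ∣ k) : k.Prime := by
  obtain ⟨p, a, hp, ha, rfl⟩ := (isPrimePow_nat_iff k).1 (isPrimePow_of_forall_proper_dvd hke hk)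
  obtain ⟨q, b, hq, -, rfl⟩ := (isPrimePow_nat_iff _).1 (isPrimePow_of_forall_proper_dvd hek he)
  obtain rfl | ha1 := eq_or_ne a 1
  · simpa using hp
  have hpq : p = q := by
    have hp_ne : p ≠ p ^ a := fun h =>
      ha1 (Nat.pow_right_injective hp.two_le (by simpa using h.symm))
    exact (Nat.prime_dvd_prime_iff_eq hp hq).1
      (hp.dvd_of_dvd_pow (hk p (dvd_pow_self p ha.ne') hp_ne))
  subst hpq
  rcases le_total a b with h | h
  · exact (hke (pow_dvd_pow p h)).elim
  · exact (hek (pow_dvd_pow p h)).elim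

lemma sum_pred_lt_two_mul_prod_pred {E : Finset ℕ} (hE : ∀ p ∈ E, 2 ≤ p) (hcard : 2 ≤ E.card) :
    ∑ p ∈ E, (p - 1) < 2 * ∏ p ∈ E, (p - 1) := by
  induction E using Finset.induction_on_max with
  | empty => simp at hcard
  | insert a s ha ih =>
    have has : a ∉ s := fun h => lt_irrefl a (ha a h)
    have hs : ∀ p ∈ s, 2 ≤ p := fun p hp => hE p (Finset.mem_insert_of_mem hp)
    rw [Finset.card_insert_of_notMem has] at hcard
    rw [Finset.sum_insert has, Finset.prod_insert has]
    obtain ⟨b, hb⟩ : s.Nonempty := Finset.card_pos.1 (by omega)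
    obtain ⟨A, rfl⟩ : ∃ A, a = A + 3 := ⟨a - 3, by have := ha b hb; have := hs b hb; omega⟩
    have hP : 1 ≤ ∏ p ∈ s, (p - 1) :=
      Finset.one_le_prod' fun p hp => Nat.le_sub_of_add_le (hs p hp)
    rcases (by omega : s.card = 1 ∨ 2 ≤ s.card) with h1 | h2
    · obtain ⟨c, rfl⟩ := Finset.card_eq_one.1 h1
      simp only [Finset.sum_singleton, Finset.prod_singleton] at hP ⊢
      generalize c - 1 = C at hP ⊢
      rw [show A + 3 - 1 = A + 2 by omega]
      nlinarith
    · have := ih hs h2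
      generalize ∏ p ∈ s, (p - 1) = P at hP this ⊢
      rw [show A + 3 - 1 = A + 2 by omega]
      nlinarith

lemma prod_pred_le_totient {m : ℕ} (hm : m ≠ 0) {P : Finset ℕ} (hP : P ⊆ m.primeFactors) :
    ∏ p ∈ P, (p - 1) ≤ m.totient := by
  have hpos : ∀ p ∈ m.primeFactors, 1 ≤ p - 1 := fun p hp =>
    Nat.le_sub_of_add_le (Nat.prime_of_mem_primeFactors hp).two_le
  calc ∏ p ∈ P, (p - 1) ≤ ∏ p ∈ m.primeFactors, (p - 1) :=
        Finset.prod_le_prod_of_subset_of_one_le' hP fun p hp _ => hpos p hp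
    _ ≤ (m / ∏ p ∈ m.primeFactors, p) * ∏ p ∈ m.primeFactors, (p - 1) :=
        Nat.le_mul_of_pos_left _ (Nat.div_pos (Nat.le_of_dvd (Nat.pos_of_ne_zero hm)
          (Nat.prod_primeFactors_dvd m)) (Finset.prod_pos fun _ => Nat.pos_of_mem_primeFactors))
    _ = m.totient := (Nat.totient_eq_div_primeFactors_mul m).symm

lemma sum_totient_lt_two_mul_totient {m : ℕ} (hm : m ≠ 0) {O : Finset ℕ} (hO : O.Nonempty)
    (hdvd : ∀ e ∈ O, e ∣ m) (hprime : ∀ e ∈ O, ∀ e' ∈ O, e ≠ e' → e.Prime) :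
    ∑ e ∈ O, e.totient < 2 * m.totient := by
  have htot : 0 < m.totient := Nat.totient_pos.2 (Nat.pos_of_ne_zero hm)
  obtain ⟨e, rfl⟩ | hO2 := hO.exists_eq_singleton_or_nontrivial
  · have := Nat.le_of_dvd htot (Nat.totient_dvd_of_dvd (hdvd e (Finset.mem_singleton_self e)))
    rw [Finset.sum_singleton]
    omega
  · have hOprime : ∀ p ∈ O, p.Prime := fun p hp =>
      let ⟨q, hq, hqp⟩ := hO2.exists_ne p
      hprime p hp q hq hqp.symm
    calc ∑ p ∈ O, p.totient = ∑ p ∈ O, (p - 1) :=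
          Finset.sum_congr rfl fun p hp => Nat.totient_prime (hOprime p hp)
      _ < 2 * ∏ p ∈ O, (p - 1) :=
          sum_pred_lt_two_mul_prod_pred (fun p hp => (hOprime p hp).two_le)
            (Finset.one_lt_card_iff_nontrivial.2 hO2)
      _ ≤ 2 * m.totient := Nat.mul_le_mul_left 2 (prod_pred_le_totient hm fun p hp =>
          Nat.mem_primeFactors.2 ⟨hOprime p hp, hdvd p hp, hm⟩)

section ReducedPowerGraph

variable {G : Type*} [Group G]

lemma orderOf_eq_of_zpowers_eq {a b : G} (h : zpowers a = zpowers b) : orderOf a = orderOf b := by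
  rw [← Nat.card_zpowers, ← Nat.card_zpowers, h]

lemma simEq_of_zpowers_eq {a b : G} (h : zpowers a = zpowers b) : simEq G a b := fun _ => by
  simp only [rpAdj, h]

lemma not_rpAdj_of_simEq {a b : G} (h : simEq G a b) : ¬ rpAdj G a b := fun hab =>
  ((h b).1 hab).elim (lt_irrefl _) (lt_irrefl _)

lemma zpowers_lt_of_simEq {a b u : G} (h : simEq G a b) (hu : zpowers u < zpowers a) :
    zpowers u < zpowers b :=
  ((h u).1 (Or.inr hu)).resolve_left fun hbu => not_rpAdj_of_simEq h (Or.inr (hbu.trans hu))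

lemma zpowers_lt_of_simEq_of_isMaxCyc {x y w : G} (hx : IsMaxCyc G x)
    (hy : zpowers y < zpowers x) (hw : simEq G w y) : zpowers w < zpowers x :=
  ((hw x).2 (Or.inl hy)).resolve_right fun hxw => hxw.ne (hx w hxw.le)

lemma dvd_orderOf_of_simEq [Finite G] {a b : G} (h : simEq G a b) {d : ℕ} (hd : d ∣ orderOf a)
    (hda : d ≠ orderOf a) : d ∣ orderOf b := by
  have hu : orderOf (a ^ (orderOf a / d)) = d := orderOf_pow_orderOf_div (orderOf_pos a).ne' hd
  have hlt : zpowers (a ^ (orderOf a / d)) < zpowers a :=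
    lt_of_le_of_ne (zpowers_le_of_mem (pow_mem (mem_zpowers a) _))
      fun he => hda (hu ▸ orderOf_eq_of_zpowers_eq he)
  exact hu ▸ orderOf_dvd_of_mem_zpowers ((zpowers_lt_of_simEq h hlt).le (mem_zpowers _))

/-- In a finite cyclic group the subgroup of order `n` is `{c | c ^ n = 1}`. -/
lemma mem_zpowers_of_orderOf_dvd [Finite G] {x a b : G} (ha : a ∈ zpowers x) (hb : b ∈ zpowers x)
    (h : orderOf a ∣ orderOf b) : a ∈ zpowers b := by
  classical
  have := Fintype.ofFinite (zpowers x)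
  set a' : zpowers x := ⟨a, ha⟩
  set b' : zpowers x := ⟨b, hb⟩
  have hb'o : orderOf b' = orderOf b := Subgroup.orderOf_mk b hb
  have hker : Finset.univ.filter (· ∈ zpowers b') = Finset.univ.filter (· ^ orderOf b = 1) := by
    refine Finset.eq_of_subset_of_card_le (fun c hc => ?_) ?_
    · simp only [Finset.mem_filter, Finset.mem_univ, true_and] at hc ⊢
      exact orderOf_dvd_iff_pow_eq_one.1 (hb'o ▸ orderOf_dvd_of_mem_zpowers hc)
    · calc _ ≤ orderOf b := IsCyclic.card_pow_eq_one_le (orderOf_pos b)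
        _ = _ := by rw [← hb'o, ← Nat.card_zpowers, Nat.card_eq_fintype_card, Fintype.card_subtype]
  have ha' : a' ∈ zpowers b' := by
    have : a' ∈ Finset.univ.filter (· ^ orderOf b = 1) := by
      simp only [Finset.mem_filter, Finset.mem_univ, true_and]
      exact orderOf_dvd_iff_pow_eq_one.1 ((Subgroup.orderOf_mk a ha).symm ▸ h)
    rw [← hker] at this
    simpa using this
  simpa [MonoidHom.map_zpowers] using mem_map_of_mem (zpowers x).subtype ha'

lemma zpowers_eq_of_orderOf_eq [Finite G] {x a b : G} (ha : a ∈ zpowers x)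
    (hb : b ∈ zpowers x) (h : orderOf a = orderOf b) : zpowers a = zpowers b :=
  le_antisymm (zpowers_le.2 (mem_zpowers_of_orderOf_dvd ha hb h.dvd))
    (zpowers_le.2 (mem_zpowers_of_orderOf_dvd hb ha h.symm.dvd))

lemma not_orderOf_dvd_of_simEq [Finite G] {x a b : G} (ha : a ∈ zpowers x) (hb : b ∈ zpowers x)
    (h : simEq G a b) (hne : orderOf a ≠ orderOf b) : ¬ orderOf a ∣ orderOf b := fun hdvd =>
  not_rpAdj_of_simEq h <| Or.inl <|
    lt_of_le_of_ne (zpowers_le.2 (mem_zpowers_of_orderOf_dvd ha hb hdvd))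
      fun he => hne (orderOf_eq_of_zpowers_eq he)

lemma orderOf_prime_of_simEq [Finite G] {x a b : G} (ha : a ∈ zpowers x) (hb : b ∈ zpowers x)
    (h : simEq G a b) (hne : orderOf a ≠ orderOf b) : (orderOf a).Prime :=
  have h' : simEq G b a := fun z => (h z).symm
  prime_of_forall_proper_dvd (not_orderOf_dvd_of_simEq ha hb h hne)
    (not_orderOf_dvd_of_simEq hb ha h' hne.symm) (fun _ => dvd_orderOf_of_simEq h)
    (fun _ => dvd_orderOf_of_simEq h')

lemma ncard_genCls [Finite G] (g : G) : (genCls G g).ncard = (orderOf g).totient := by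
  classical
  have := Fintype.ofFinite (zpowers g)
  have himage : genCls G g = Subtype.val '' {c : zpowers g | orderOf c = orderOf g} := by
    ext a
    refine ⟨fun ha => ⟨⟨a, ha ▸ mem_zpowers a⟩, ?_, rfl⟩, ?_⟩
    · simpa [Subgroup.orderOf_mk] using orderOf_eq_of_zpowers_eq ha
    · rintro ⟨c, hc, rfl⟩
      exact zpowers_eq_of_orderOf_eq c.2 (mem_zpowers g) (by simpa using hc)
  rw [himage, Set.ncard_image_of_injective _ Subtype.val_injective, Set.ncard_eq_toFinset_card',
    Set.toFinset_ofPred]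
  exact IsCyclic.card_orderOf_eq_totient (by rw [← Nat.card_eq_fintype_card, Nat.card_zpowers])

lemma card_le_sum_totient_orderOf [Finite G] {x : G} {S : Finset G}
    (hS : ∀ a ∈ S, a ∈ zpowers x) : S.card ≤ ∑ e ∈ S.image orderOf, e.totient := by
  rw [Finset.card_eq_sum_card_image orderOf S]
  refine Finset.sum_le_sum fun e he => ?_
  obtain ⟨a, ha, rfl⟩ := Finset.mem_image.1 he
  have hsub : ↑(S.filter (orderOf · = orderOf a)) ⊆ genCls G a := fun b hb => by
    obtain ⟨hbS, hba⟩ := Finset.mem_filter.1 hb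
    exact zpowers_eq_of_orderOf_eq (hS b hbS) (hS a ha) hba
  rw [← ncard_genCls, ← Set.ncard_coe_finset]
  exact Set.ncard_le_ncard hsub

lemma two_mul_totient_le_ncard_hatCls [Finite G] {x : G} (hx : TypeII G x) :
    2 * (orderOf x).totient ≤ (hatCls G x).ncard := by
  obtain ⟨⟨a, b, ha, hb, hab⟩, hclass⟩ := hx
  have hsub : ∀ {c}, simEq G c x → genCls G c ⊆ hatCls G x := fun hc d hd z =>
    (simEq_of_zpowers_eq hd z).trans (hc z)
  have hdisj : Disjoint (genCls G a) (genCls G b) :=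
    Set.disjoint_left.2 fun d hda hdb => hab (hda.symm.trans hdb)
  calc 2 * (orderOf x).totient = (genCls G a).ncard + (genCls G b).ncard := by
        rw [ncard_genCls, ncard_genCls, (hclass a ha).2, (hclass b hb).2, two_mul]
    _ = (genCls G a ∪ genCls G b).ncard := (Set.ncard_union_eq hdisj).symm
    _ ≤ (hatCls G x).ncard := Set.ncard_le_ncard (Set.union_subset (hsub ha) (hsub hb))

end ReducedPowerGraph

theorem typeII_card_lt_general {G : Type*} [Group G] [Fintype G] (x y : G)
    (hsub : zpowers y < zpowers x) (hTx : TypeII G x) :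
    (hatCls G y).ncard < (hatCls G x).ncard := by
  classical
  set S := (hatCls G y).toFinset
  have hmax : IsMaxCyc G x := (hTx.2 x fun _ => Iff.rfl).1
  have hmem : ∀ w ∈ S, w ∈ zpowers x := fun w hw =>
    (zpowers_lt_of_simEq_of_isMaxCyc hmax hsub (Set.mem_toFinset.1 hw)).le (mem_zpowers w)
  have hdvd : ∀ e ∈ S.image orderOf, e ∣ orderOf x := by
    simp only [Finset.mem_image]
    rintro _ ⟨w, hw, rfl⟩
    exact orderOf_dvd_of_mem_zpowers (hmem w hw)
  have hprime : ∀ e ∈ S.image orderOf, ∀ e' ∈ S.image orderOf, e ≠ e' → e.Prime := by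
    simp only [Finset.mem_image]
    rintro _ ⟨w, hw, rfl⟩ _ ⟨w', hw', rfl⟩ hne
    exact orderOf_prime_of_simEq (hmem w hw) (hmem w' hw')
      (fun z => (Set.mem_toFinset.1 hw z).trans (Set.mem_toFinset.1 hw' z).symm) hne
  have hne : (S.image orderOf).Nonempty :=
    ⟨orderOf y, Finset.mem_image_of_mem _ (Set.mem_toFinset.2 fun _ => Iff.rfl)⟩
  calc (hatCls G y).ncard = S.card := Set.ncard_eq_toFinset_card' _
    _ ≤ ∑ e ∈ S.image orderOf, e.totient := card_le_sum_totient_orderOf hmem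
    _ < 2 * (orderOf x).totient :=
        sum_totient_lt_two_mul_totient (orderOf_pos x).ne' hne hdvd hprime
    _ ≤ (hatCls G x).ncard := two_mul_totient_le_ncard_hatCls hTx

/-- for non-identity `x, y` with `⟨y⟩ ⊊ ⟨x⟩`, if `x̂` is of Type II then
`|ŷ| < |x̂|`. -/
theorem typeII_card_lt {G : Type*} [Group G] [Fintype G] (x y : G)
    (hx : x ≠ 1) (hy : y ≠ 1) (hsub : zpowers y < zpowers x) (hTx : TypeII G x) :
    (hatCls G y).ncard < (hatCls G x).ncard :=
  typeII_card_lt_general x y hsub hTx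
end

section
/- Let G be a finite group isomorphic to the cyclic group Z_{2^m} (m ≥ 1) or to the generalized quaternion group Q_{2^α} of order 2^α (α ≥ 3), and let a be the unique element of order 2 in G. Then every automorphism π of the reduced power graph RP(G) satisfies e^π = e or e^π = a, where e is the identity element. -/
open Subgroup Set

variable (G : Type*) [Group G]

/-
A vertex of `RP(G)` adjacent to all other vertices is an involution or the identity: `x` and
`x⁻¹` generate the same cyclic subgroup, so they are never adjacent, which forces `x⁻¹ = x`.
The identity is such a vertex, and graph automorphisms preserve this property, so `π 1` is one
too; when `a` is the only involution this leaves `π 1 ∈ {1, a}`.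
-/

section

variable {G}

lemma rpAdj_one_of_ne_one {y : G} (hy : y ≠ 1) : rpAdj G 1 y :=
  Or.inl (by rwa [zpowers_one_eq_bot, bot_lt_iff_ne_bot, zpowers_ne_bot])

lemma not_rpAdj_inv (x : G) : ¬ rpAdj G x x⁻¹ := by
  simp [rpAdj, zpowers_inv]

lemma RPAut.rpAdj_apply_one {π : Equiv.Perm G} (hπ : π ∈ RPAut G) {y : G} (hy : y ≠ π 1) :
    rpAdj G (π 1) y := by
  have hy' : π.symm y ≠ 1 := fun h => hy (by rw [← h, π.apply_symm_apply])
  simpa using (hπ 1 (π.symm y)).mpr (rpAdj_one_of_ne_one hy')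

lemma eq_one_or_orderOf_eq_two_of_inv_eq {x : G} (hx : x⁻¹ = x) : x = 1 ∨ orderOf x = 2 := by
  refine or_iff_not_imp_left.mpr fun hne => orderOf_eq_prime ?_ hne
  rw [sq, ← mul_inv_cancel x, hx]

end

theorem aut_RP_one_image_general {G : Type*} [Group G]
    (a : G) (huniq : ∀ b : G, orderOf b = 2 → b = a)
    (π : Equiv.Perm G) (hπ : π ∈ RPAut G) :
    π 1 = 1 ∨ π 1 = a := by
  have hinv : (π 1)⁻¹ = π 1 := by
    by_contra hne
    exact not_rpAdj_inv (π 1) (RPAut.rpAdj_apply_one hπ hne)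
  exact (eq_one_or_orderOf_eq_two_of_inv_eq hinv).imp_right (huniq _)

/-- if the finite group `G` is cyclic of order `2^m` (`m ≥ 1`) or generalized
quaternion of order `2^α` (`α ≥ 3`), and `a` is its unique element of order `2`, then every
automorphism `π` of `RP(G)` satisfies `π(e) = e` or `π(e) = a`. -/
theorem aut_RP_one_image {G : Type*} [Group G] [Fintype G]
    (hG : (IsCyclic G ∧ ∃ m : ℕ, 1 ≤ m ∧ Fintype.card G = 2 ^ m) ∨
          (∃ α : ℕ, 3 ≤ α ∧ Nonempty (G ≃* QuaternionGroup (2 ^ (α - 2)))))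
    (a : G) (ha : orderOf a = 2) (huniq : ∀ b : G, orderOf b = 2 → b = a)
    (π : Equiv.Perm G) (hπ : π ∈ RPAut G) :
    π 1 = 1 ∨ π 1 = a :=
  aut_RP_one_image_general a huniq π hπ
end

section
/- Let G be a finite group, x ∈ G, and π an automorphism of the directed reduced power graph →RP(G). If the ≃-class x̂ is of Type I (i.e., x̂ = [x]), then the ≃-class of x^π is also of Type I and o(x^π) = o(x). -/
open Subgroup Set

variable (G : Type*) [Group G]

/-!
An automorphism `π` of `→RP(G)` carries `O(a)` and `U(a)` onto `O(π a)` and `U(π a)`, so it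
preserves `≃`, the size of `O(a)`, and prime order (`O(a) = {1}`); moreover
`o(a) = |O(a)| + φ(o(a))`. Suppose `(π x)^ = π [x]` contained generators `w`, `v` of distinct
cyclic subgroups. Then `O(w) = O(v) ⊆ ⟨w⟩ ∩ ⟨v⟩` forces `o(w) = p^k`, and counting gives
`o(w) + φ(o(v)) ≤ o(x)`. For `k ≥ 2` the elements of some prime order `r > p` in `O(x)` do not fit
among the `p - 1` elements of order `p` in `⟨w⟩`. For `k = 1` either `x ≃ w`, or `w v` has order
`p q` and its preimage `u ∈ U(x)` has `o(u) = o(x)²`, too many generators for the `∼`-class of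
`w v`, which is of Type I. Once `(π x)^` is of Type I, `o(π x) = |O(x)| + |x̂| = o(x)`.
-/

open scoped Nat

namespace ReducedPowerGraph

variable {G : Type*} [Group G]

/-- The out-neighbourhood `O(a)` of `a` in `→RP(G)`. -/
def cycBelow (a : G) : Set G := {b | zpowers b < zpowers a}

/-- The in-neighbourhood `U(a)` of `a` in `→RP(G)`. -/
def cycAbove (a : G) : Set G := {b | zpowers a < zpowers b}

@[simp] lemma mem_cycBelow {a b : G} : b ∈ cycBelow a ↔ zpowers b < zpowers a := Iff.rfl

@[simp] lemma mem_cycAbove {a b : G} : b ∈ cycAbove a ↔ zpowers a < zpowers b := Iff.rfl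

lemma one_mem_cycBelow {a : G} (ha : a ≠ 1) : (1 : G) ∈ cycBelow a := by
  simpa [zpowers_one_eq_bot, bot_lt_iff_ne_bot] using ha

lemma cycBelow_one : cycBelow (1 : G) = ∅ := by
  ext; simp [zpowers_one_eq_bot]

lemma coe_zpowers_subset_cycBelow {a b : G} (h : zpowers b < zpowers a) :
    (zpowers b : Set G) ⊆ cycBelow a :=
  fun _ hc => (zpowers_le.2 hc).trans_lt h

lemma simEq_symm {x y : G} (h : simEq G x y) : simEq G y x := fun z => (h z).symm

lemma simEq_trans {x y z : G} (h : simEq G x y) (h' : simEq G y z) : simEq G x z :=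
  fun a => (h a).trans (h' a)

lemma cycBelow_subset_and_cycAbove_subset_of_simEq {x y : G} (h : simEq G x y) :
    cycBelow x ⊆ cycBelow y ∧ cycAbove x ⊆ cycAbove y := by
  have hyx : ¬ rpAdj G y x := fun hyx => by
    rcases (h x).2 hyx with hxx | hxx <;> exact lt_irrefl _ hxx
  refine ⟨fun a ha => ?_, fun a ha => ?_⟩
  · rcases (h a).1 (Or.inr ha) with hya | hay
    · exact absurd (Or.inl (hya.trans ha)) hyx
    · exact hay
  · rcases (h a).1 (Or.inl ha) with hya | hay
    · exact hya
    · exact absurd (Or.inr (ha.trans hay)) hyx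

lemma simEq_iff {x y : G} :
    simEq G x y ↔ cycBelow x = cycBelow y ∧ cycAbove x = cycAbove y := by
  refine ⟨fun h => ?_, fun ⟨hO, hU⟩ z => ?_⟩
  · obtain ⟨hO, hU⟩ := cycBelow_subset_and_cycAbove_subset_of_simEq h
    obtain ⟨hO', hU'⟩ := cycBelow_subset_and_cycAbove_subset_of_simEq (simEq_symm h)
    exact ⟨hO.antisymm hO', hU.antisymm hU'⟩
  · change z ∈ cycAbove x ∨ z ∈ cycBelow x ↔ z ∈ cycAbove y ∨ z ∈ cycBelow y
    rw [hO, hU]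

lemma genCls_subset_hatCls (x : G) : genCls G x ⊆ hatCls G x := fun y hy z => by
  simp only [rpAdj, show zpowers y = zpowers x from hy]

lemma typeI_iff {x : G} : TypeI G x ↔ ∀ y, simEq G y x → zpowers y = zpowers x :=
  ⟨fun h _ hy => (h.le hy : _),
    fun h => Set.Subset.antisymm (fun y hy => h y hy) (genCls_subset_hatCls x)⟩

lemma typeI_mul {a b : G} (ha : zpowers a < zpowers (a * b)) (hb : zpowers b < zpowers (a * b)) :
    TypeI G (a * b) := by
  refine typeI_iff.2 fun y hy => ?_
  have hO := (simEq_iff.1 hy).1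
  have hab : a * b ∈ zpowers y := mul_mem
    (zpowers_le.1 (show a ∈ cycBelow y by rw [hO]; exact ha).le)
    (zpowers_le.1 (show b ∈ cycBelow y by rw [hO]; exact hb).le)
  refine ((zpowers_le.2 hab).lt_or_eq.resolve_left fun hlt => ?_).symm
  exact lt_irrefl (zpowers (a * b)) (show a * b ∈ cycBelow (a * b) by rw [← hO]; exact hlt)

section DRPAut

variable {π : Equiv.Perm G}

lemma image_cycBelow (hπ : π ∈ DRPAut G) (a : G) : π '' cycBelow a = cycBelow (π a) := by
  ext b
  obtain ⟨c, rfl⟩ := π.surjective b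
  rw [π.injective.mem_set_image, mem_cycBelow, mem_cycBelow]
  exact (hπ a c).symm

lemma image_cycAbove (hπ : π ∈ DRPAut G) (a : G) : π '' cycAbove a = cycAbove (π a) := by
  ext b
  obtain ⟨c, rfl⟩ := π.surjective b
  rw [π.injective.mem_set_image, mem_cycAbove, mem_cycAbove]
  exact (hπ c a).symm

lemma map_one_of_mem_DRPAut (hπ : π ∈ DRPAut G) : π 1 = 1 := by
  by_contra h
  have h1 := one_mem_cycBelow h
  rw [← image_cycBelow hπ, cycBelow_one, Set.image_empty] at h1
  exact h1

lemma simEq_apply_iff (hπ : π ∈ DRPAut G) {a b : G} :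
    simEq G (π a) (π b) ↔ simEq G a b := by
  simp only [simEq_iff, ← image_cycBelow hπ, ← image_cycAbove hπ,
    Set.image_eq_image π.injective]

lemma image_hatCls (hπ : π ∈ DRPAut G) (a : G) : π '' hatCls G a = hatCls G (π a) := by
  ext b
  obtain ⟨c, rfl⟩ := π.surjective b
  rw [π.injective.mem_set_image]
  exact (simEq_apply_iff hπ).symm

lemma ncard_cycBelow_apply (hπ : π ∈ DRPAut G) (a : G) :
    (cycBelow (π a)).ncard = (cycBelow a).ncard := by
  rw [← image_cycBelow hπ, Set.ncard_image_of_injective _ π.injective]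

lemma ncard_hatCls_apply (hπ : π ∈ DRPAut G) (a : G) :
    (hatCls G (π a)).ncard = (hatCls G a).ncard := by
  rw [← image_hatCls hπ, Set.ncard_image_of_injective _ π.injective]

end DRPAut

lemma mem_of_pow_mem_of_coprime {H : Subgroup G} {a : G} {m n : ℕ} (hmn : m.Coprime n)
    (hm : a ^ m ∈ H) (hn : a ^ n ∈ H) : a ∈ H := by
  obtain ⟨u, v, huv⟩ := Nat.isCoprime_iff_coprime.2 hmn
  have ha : (a ^ m) ^ u * (a ^ n) ^ v = a := by
    rw [← zpow_natCast, ← zpow_natCast, ← zpow_mul, ← zpow_mul, ← zpow_add, mul_comm (m : ℤ),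
      mul_comm (n : ℤ), huv, zpow_one]
  exact ha ▸ mul_mem (zpow_mem hm u) (zpow_mem hn v)

lemma ncard_coe_zpowers (a : G) : (zpowers a : Set G).ncard = orderOf a := by
  rw [← Nat.card_coe_set_eq]
  exact Nat.card_zpowers a

lemma mem_cycBelow_of_mem_zpowers {a b : G} (hb : b ∈ zpowers a) (h : orderOf b ≠ orderOf a) :
    b ∈ cycBelow a :=
  (zpowers_le.2 hb).lt_of_ne fun he => h (by rw [← Nat.card_zpowers, he, Nat.card_zpowers])

section Finite

variable [Finite G]

lemma zpowers_eq_zpowers_pow_of_mem {a b : G} (hb : b ∈ zpowers a) :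
    zpowers b = zpowers (a ^ (orderOf a / orderOf b)) := by
  obtain ⟨i, rfl⟩ : ∃ i : ℕ, a ^ i = b := mem_powers_iff_mem_zpowers.2 hb
  set d := orderOf (a ^ i) with hd_def
  have hd : d ∣ orderOf a := orderOf_dvd_of_mem_zpowers hb
  obtain ⟨j, hj⟩ : orderOf a / d ∣ i := by
    have h : orderOf a ∣ i * d := orderOf_dvd_of_pow_eq_one (by
      rw [pow_mul, hd_def, pow_orderOf_eq_one])
    rw [← Nat.div_mul_cancel hd] at h
    exact Nat.dvd_of_mul_dvd_mul_right (orderOf_pos _) h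
  refine eq_of_le_of_card_ge (zpowers_le.2 ?_) ?_
  · rw [hj, pow_mul]
    exact pow_mem (mem_zpowers _) j
  · rw [Nat.card_zpowers, Nat.card_zpowers, orderOf_pow_orderOf_div (orderOf_pos a).ne' hd]

lemma zpowers_le_of_orderOf_dvd {a b c : G} (hb : b ∈ zpowers a) (hc : c ∈ zpowers a)
    (h : orderOf b ∣ orderOf c) : zpowers b ≤ zpowers c := by
  rw [zpowers_eq_zpowers_pow_of_mem hb, zpowers_eq_zpowers_pow_of_mem hc, zpowers_le]
  obtain ⟨m, hm⟩ := Nat.div_dvd_div_left (orderOf_dvd_of_mem_zpowers hc) h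
  rw [hm, pow_mul]
  exact pow_mem (mem_zpowers _) m

lemma zpowers_eq_of_orderOf_eq {a b c : G} (hb : b ∈ zpowers a) (hc : c ∈ zpowers a)
    (h : orderOf b = orderOf c) : zpowers b = zpowers c :=
  (zpowers_le_of_orderOf_dvd hb hc h.dvd).antisymm (zpowers_le_of_orderOf_dvd hc hb h.symm.dvd)

lemma mem_genCls_iff {a b : G} : b ∈ genCls G a ↔ b ∈ zpowers a ∧ orderOf b = orderOf a := by
  refine ⟨fun h => ⟨h ▸ mem_zpowers b, ?_⟩,
    fun h => zpowers_eq_of_orderOf_eq h.1 (mem_zpowers a) h.2⟩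
  rw [← Nat.card_zpowers, ← Nat.card_zpowers, show zpowers b = zpowers a from h]

lemma ncard_genCls (a : G) : (genCls G a).ncard = φ (orderOf a) := by
  classical
  let _ : Fintype (zpowers a) := Fintype.ofFinite _
  have himage : genCls G a = Subtype.val '' {b : zpowers a | orderOf b = orderOf a} := by
    ext b
    rw [mem_genCls_iff]
    constructor
    · rintro ⟨hb, ho⟩
      exact ⟨⟨b, hb⟩, by rwa [Set.mem_ofPred_eq, Subgroup.orderOf_mk], rfl⟩
    · rintro ⟨c, hc, rfl⟩
      exact ⟨c.2, by rwa [Subgroup.orderOf_coe]⟩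
  rw [himage, Set.ncard_image_of_injective _ Subtype.val_injective, Set.ncard_eq_toFinset_card',
    Set.toFinset_ofPred, IsCyclic.card_orderOf_eq_totient]
  rw [Fintype.card_eq_nat_card, Nat.card_zpowers]

lemma ncard_cycBelow_add_totient (a : G) : (cycBelow a).ncard + φ (orderOf a) = orderOf a := by
  have hunion : cycBelow a ∪ genCls G a = zpowers a := by
    ext b
    rw [Set.mem_union, SetLike.mem_coe, ← zpowers_le, le_iff_lt_or_eq]
    rfl
  have hdisj : Disjoint (cycBelow a) (genCls G a) :=
    Set.disjoint_left.2 fun _ hb hb' => (mem_cycBelow.1 hb).ne hb'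
  rw [← ncard_genCls, ← Set.ncard_union_eq hdisj, hunion, ncard_coe_zpowers]

lemma cycBelow_eq_singleton_one_iff {a : G} : cycBelow a = {1} ↔ (orderOf a).Prime := by
  have h := ncard_cycBelow_add_totient a
  have hpos := orderOf_pos a
  rw [← Nat.totient_eq_iff_prime hpos]
  refine ⟨fun h1 => ?_, fun hφ => ?_⟩
  · rw [h1, Set.ncard_singleton] at h
    omega
  · have hcard : (cycBelow a).ncard = 1 := by omega
    have ha : a ≠ 1 := by
      rintro rfl
      rw [cycBelow_one, Set.ncard_empty] at hcard
      exact zero_ne_one hcard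
    exact (Set.eq_of_subset_of_ncard_le (Set.singleton_subset_iff.2 (one_mem_cycBelow ha))
      (by rw [hcard, Set.ncard_singleton])).symm

lemma orderOf_apply_prime_iff {π : Equiv.Perm G} (hπ : π ∈ DRPAut G) {a : G} :
    (orderOf (π a)).Prime ↔ (orderOf a).Prime := by
  have h1 : π '' {1} = ({1} : Set G) := by rw [Set.image_singleton, map_one_of_mem_DRPAut hπ]
  rw [← cycBelow_eq_singleton_one_iff, ← cycBelow_eq_singleton_one_iff, ← image_cycBelow hπ]
  conv_lhs => rw [← h1]
  exact Set.image_eq_image π.injective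

lemma pow_mem_cycBelow {a : G} {p : ℕ} (hp : p.Prime) (hpa : p ∣ orderOf a) :
    a ^ p ∈ cycBelow a := by
  refine mem_cycBelow_of_mem_zpowers (pow_mem (mem_zpowers a) p) ?_
  rw [orderOf_pow_of_dvd hp.ne_zero hpa]
  exact (Nat.div_lt_self (orderOf_pos a) hp.one_lt).ne

lemma orderOf_le_mul_ncard_cycBelow {a : G} {p : ℕ} (hp : p.Prime) (hpa : p ∣ orderOf a) :
    orderOf a ≤ p * (cycBelow a).ncard := by
  have h := Set.ncard_le_ncard (coe_zpowers_subset_cycBelow (pow_mem_cycBelow hp hpa))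
  rw [ncard_coe_zpowers, orderOf_pow_of_dvd hp.ne_zero hpa] at h
  calc orderOf a = p * (orderOf a / p) := (Nat.mul_div_cancel' hpa).symm
    _ ≤ p * (cycBelow a).ncard := Nat.mul_le_mul_left p h

/-- If two distinct primes divided `o(a)`, the corresponding powers of `a` would generate `a`. -/
lemma isPrimePow_orderOf_of_cycBelow_subset {a : G} {H : Subgroup G}
    (hsub : cycBelow a ⊆ H) (ha : a ∉ H) : IsPrimePow (orderOf a) := by
  have h1 : orderOf a ≠ 1 := fun h => ha (orderOf_eq_one_iff.1 h ▸ one_mem H)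
  obtain ⟨p, hp, hpa⟩ := Nat.exists_prime_and_dvd h1
  refine isPrimePow_iff_unique_prime_dvd.2 ⟨p, ⟨hp, hpa⟩, fun q ⟨hq, hqa⟩ => ?_⟩
  by_contra hqp
  exact ha (mem_of_pow_mem_of_coprime ((Nat.coprime_primes hq hp).2 hqp)
    (hsub (pow_mem_cycBelow hq hqa)) (hsub (pow_mem_cycBelow hp hpa)))

lemma isPrimePow_orderOf_of_cycBelow_eq {w v : G} (hO : cycBelow w = cycBelow v)
    (hne : zpowers w ≠ zpowers v) : IsPrimePow (orderOf w) := by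
  refine isPrimePow_orderOf_of_cycBelow_subset (H := zpowers v)
    (hO ▸ fun b hb => zpowers_le.1 (mem_cycBelow.1 hb).le) fun hwv => ?_
  have hw : w ∈ cycBelow w := hO ▸ (zpowers_le.2 hwv).lt_of_ne hne
  exact lt_irrefl _ (mem_cycBelow.1 hw)

lemma ncard_cycBelow_of_orderOf_eq_prime_pow {a : G} {p k : ℕ} (hp : p.Prime)
    (ha : orderOf a = p ^ (k + 1)) : (cycBelow a).ncard = p ^ k := by
  have h := ncard_cycBelow_add_totient a
  rw [ha, Nat.totient_prime_pow_succ hp, pow_succ] at h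
  zify [hp.one_lt.le] at h
  nlinarith [pow_pos hp.pos k]

lemma orderOf_eq_sq_of_cycBelow_eq_zpowers {a b : G} (h : cycBelow a = zpowers b)
    (hb : (orderOf b).Prime) : orderOf a = orderOf b ^ 2 := by
  have ha : a ∉ zpowers b := fun ha => lt_irrefl (zpowers a)
    (mem_cycBelow.1 (h ▸ ha : a ∈ cycBelow a))
  obtain ⟨p, k, hp, hk, hpk⟩ :=
    (isPrimePow_nat_iff _).1 (isPrimePow_orderOf_of_cycBelow_subset h.le ha)
  obtain ⟨j, rfl⟩ : ∃ j, k = j + 1 := ⟨k - 1, by omega⟩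
  have hpj := ncard_cycBelow_of_orderOf_eq_prime_pow hp hpk.symm
  rw [h, ncard_coe_zpowers] at hpj
  obtain ⟨rfl, rfl⟩ := (hb.pow_eq_iff).1 hpj.symm
  exact hpk.symm

lemma ncard_setOf_orderOf_eq_le (a : G) (d : ℕ) :
    {b | b ∈ zpowers a ∧ orderOf b = d}.ncard ≤ φ d := by
  rcases Set.eq_empty_or_nonempty {b | b ∈ zpowers a ∧ orderOf b = d} with h | ⟨b, hb, rfl⟩
  · simp [h]
  · rw [← ncard_genCls b]
    exact Set.ncard_le_ncard fun c ⟨hc, hcb⟩ => zpowers_eq_of_orderOf_eq hc hb hcb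

lemma orderOf_mul_eq_and_mem_cycBelow_mul {c w v : G} (hwc : w ∈ zpowers c)
    (hvc : v ∈ zpowers c) (hw : (orderOf w).Prime) (hv : (orderOf v).Prime)
    (hwv : orderOf w ≠ orderOf v) :
    orderOf (w * v) = orderOf w * orderOf v ∧ w ∈ cycBelow (w * v) ∧ v ∈ cycBelow (w * v) := by
  have hcomm : Commute w v := by
    obtain ⟨i, rfl⟩ := mem_zpowers_iff.1 hwc
    obtain ⟨j, rfl⟩ := mem_zpowers_iff.1 hvc
    exact (Commute.refl c).zpow_zpow i j
  have ho : orderOf (w * v) = orderOf w * orderOf v :=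
    hcomm.orderOf_mul_eq_mul_orderOf_of_coprime ((Nat.coprime_primes hw hv).2 hwv)
  have hwvc : w * v ∈ zpowers c := mul_mem hwc hvc
  refine ⟨ho, mem_cycBelow_of_mem_zpowers ?_ ?_, mem_cycBelow_of_mem_zpowers ?_ ?_⟩
  · exact zpowers_le.1 (zpowers_le_of_orderOf_dvd hwc hwvc (ho ▸ dvd_mul_right _ _))
  · rw [ho]
    exact ((Nat.lt_mul_iff_one_lt_right hw.pos).2 hv.one_lt).ne
  · exact zpowers_le.1 (zpowers_le_of_orderOf_dvd hvc hwvc (ho ▸ dvd_mul_left _ _))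
  · rw [ho]
    exact ((Nat.lt_mul_iff_one_lt_left hv.pos).2 hw.one_lt).ne

section DRPAut

variable {π : Equiv.Perm G}

lemma totient_orderOf_le_of_typeI_apply (hπ : π ∈ DRPAut G) {a : G} (h : TypeI G (π a)) :
    φ (orderOf a) ≤ φ (orderOf (π a)) := by
  rw [← ncard_genCls, ← ncard_genCls, ← h, ncard_hatCls_apply hπ]
  exact Set.ncard_le_ncard (genCls_subset_hatCls a)

lemma orderOf_apply_eq_of_typeI (hπ : π ∈ DRPAut G) {a : G} (ha : TypeI G a)
    (hπa : TypeI G (π a)) : orderOf (π a) = orderOf a := by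
  rw [← ncard_cycBelow_add_totient, ← ncard_cycBelow_add_totient a, ← ncard_genCls,
    ← ncard_genCls, ← ha, ← hπa, ncard_hatCls_apply hπ, ncard_cycBelow_apply hπ]

/-- Two `∼`-classes inside `π x̂` together have at most `φ(o(x))` elements. -/
lemma orderOf_add_totient_le (hπ : π ∈ DRPAut G) {x w v : G} (hx : TypeI G x)
    (hw : simEq G w (π x)) (hv : simEq G v (π x)) (hne : zpowers w ≠ zpowers v) :
    orderOf w + φ (orderOf v) ≤ orderOf x := by
  have hsub : genCls G w ∪ genCls G v ⊆ hatCls G (π x) := Set.union_subset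
    (fun b hb => simEq_trans (genCls_subset_hatCls w hb) hw)
    (fun b hb => simEq_trans (genCls_subset_hatCls v hb) hv)
  have hdisj : Disjoint (genCls G w) (genCls G v) :=
    Set.disjoint_left.2 fun b hbw hbv => hne ((hbw : zpowers b = _).symm.trans hbv)
  have hcard := Set.ncard_le_ncard hsub
  rw [Set.ncard_union_eq hdisj, ncard_hatCls_apply hπ, hx, ncard_genCls, ncard_genCls,
    ncard_genCls] at hcard
  have hO : (cycBelow w).ncard = (cycBelow x).ncard := by
    rw [(simEq_iff.1 hw).1, ncard_cycBelow_apply hπ]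
  have hw' := ncard_cycBelow_add_totient w
  have hx' := ncard_cycBelow_add_totient x
  omega

/-- A prime `r ∣ o(x)` gives `r - 1` elements of order `r` in `O(x)`, carried by `π` to elements
of order `p` in `⟨w⟩`, so `r ≤ p`; but `|O(x)| = p^(k+1)` forces `r > p` once `o(x) > p^(k+2)`. -/
lemma orderOf_le_of_image_cycBelow_eq (hπ : π ∈ DRPAut G) {x w : G} {p k : ℕ} (hp : p.Prime)
    (hw : orderOf w = p ^ (k + 2)) (hO : π '' cycBelow x = cycBelow w) :
    orderOf x ≤ orderOf w := by
  by_contra! hlt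
  have hcard : (cycBelow x).ncard = p ^ (k + 1) := by
    rw [← ncard_cycBelow_of_orderOf_eq_prime_pow hp hw, ← hO,
      Set.ncard_image_of_injective _ π.injective]
  have hpk : 1 < p ^ (k + 1) := Nat.one_lt_pow k.succ_ne_zero hp.one_lt
  have hx1 : orderOf x ≠ 1 := by
    have := orderOf_pos w
    omega
  obtain ⟨r, hr, hrx⟩ := Nat.exists_prime_and_dvd hx1
  have hpr : p < r := by
    have h := orderOf_le_mul_ncard_cycBelow hr hrx
    rw [hcard] at h
    rw [hw, pow_succ' p (k + 1)] at hlt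
    exact Nat.lt_of_mul_lt_mul_right (hlt.trans_le h)
  have hrx' : r ≠ orderOf x := by
    rintro hrx'
    rw [cycBelow_eq_singleton_one_iff.2 (hrx' ▸ hr), Set.ncard_singleton] at hcard
    omega
  set y := x ^ (orderOf x / r)
  have hy : orderOf y = r := orderOf_pow_orderOf_div (orderOf_pos x).ne' hrx
  have hyx : zpowers y < zpowers x :=
    mem_cycBelow_of_mem_zpowers (pow_mem (mem_zpowers x) _) (hy ▸ hrx')
  have hmaps : π '' genCls G y ⊆ {c | c ∈ zpowers w ∧ orderOf c = p} := by
    rintro _ ⟨b, hb, rfl⟩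
    have hbw : π b ∈ cycBelow w :=
      hO ▸ Set.mem_image_of_mem π (coe_zpowers_subset_cycBelow hyx (hb ▸ mem_zpowers b))
    have hbp : (orderOf (π b)).Prime :=
      (orderOf_apply_prime_iff hπ).2 ((mem_genCls_iff.1 hb).2.symm ▸ hy.symm ▸ hr)
    have hdvd : orderOf (π b) ∣ p ^ (k + 2) :=
      hw ▸ orderOf_dvd_of_mem_zpowers (zpowers_le.1 hbw.le)
    exact ⟨zpowers_le.1 hbw.le, (Nat.prime_dvd_prime_iff_eq hbp hp).1 (hbp.dvd_of_dvd_pow hdvd)⟩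
  have h := (Set.ncard_le_ncard hmaps).trans (ncard_setOf_orderOf_eq_le w p)
  rw [Set.ncard_image_of_injective _ π.injective, ncard_genCls, hy, Nat.totient_prime hr,
    Nat.totient_prime hp] at h
  have := hp.two_le
  omega

/-- Here `O(u) ⊇ ⟨x⟩` has exactly `p + q - 1 ≤ o(x)` elements, so `O(u) = ⟨x⟩` and `o(u) = o(x)²`,
whose `φ(o(x)²)` generators cannot fit into the `∼`-class of `π u`. -/
lemma orderOf_add_one_lt_of_typeI_apply (hπ : π ∈ DRPAut G) {x u : G} {p q : ℕ}
    (hx : (orderOf x).Prime) (hxu : zpowers x < zpowers u) (hu : TypeI G (π u))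
    (hp : p.Prime) (hq : q.Prime) (hpq : p ≠ q) (hπu : orderOf (π u) = p * q) :
    orderOf x + 1 < p + q := by
  by_contra! hle
  have hφ : φ (orderOf (π u)) = (p - 1) * (q - 1) := by
    rw [hπu, Nat.totient_mul ((Nat.coprime_primes hp hq).2 hpq), Nat.totient_prime hp,
      Nat.totient_prime hq]
  have hcard : (cycBelow u).ncard + 1 = p + q := by
    have h := ncard_cycBelow_add_totient (π u)
    rw [hφ, hπu, ncard_cycBelow_apply hπ] at h
    have := hp.two_le
    have := hq.two_le
    zify [hp.one_le, hq.one_le] at h ⊢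
    nlinarith
  have hOu : cycBelow u = zpowers x := (Set.eq_of_subset_of_ncard_le
    (coe_zpowers_subset_cycBelow hxu) (by rw [ncard_coe_zpowers]; omega)).symm
  have hφu := totient_orderOf_le_of_typeI_apply hπ hu
  rw [orderOf_eq_sq_of_cycBelow_eq_zpowers hOu hx, hφ, Nat.totient_prime_pow hx two_pos,
    show 2 - 1 = 1 from rfl, pow_one] at hφu
  have := hp.two_le
  have := hq.two_le
  zify [hp.one_le, hq.one_le, hx.one_le] at hφu hle
  nlinarith

lemma zpowers_eq_of_simEq_apply_of_orderOf_prime (hπ : π ∈ DRPAut G) {x w v : G}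
    (hx : TypeI G x) (hw : simEq G w (π x)) (hv : simEq G v (π x)) (hp : (orderOf w).Prime) :
    zpowers w = zpowers v := by
  by_contra hne
  obtain ⟨hOw, hUw⟩ := simEq_iff.1 hw
  obtain ⟨hOv, hUv⟩ := simEq_iff.1 hv
  have h1w := cycBelow_eq_singleton_one_iff.2 hp
  have hq : (orderOf v).Prime :=
    cycBelow_eq_singleton_one_iff.1 (hOv.trans (hOw.symm.trans h1w))
  have hxp : (orderOf x).Prime := (orderOf_apply_prime_iff hπ).1
    (cycBelow_eq_singleton_one_iff.1 (hOw.symm.trans h1w))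
  rcases (cycAbove w).eq_empty_or_nonempty with hU | ⟨c, hc⟩
  · have hUx : cycAbove x = ∅ := Set.image_eq_empty.1 (by rw [image_cycAbove hπ, ← hUw, hU])
    have hxw : simEq G x w :=
      simEq_iff.2 ⟨(cycBelow_eq_singleton_one_iff.2 hxp).trans h1w.symm, hUx.trans hU.symm⟩
    have hvx : simEq G v x := simEq_trans (simEq_trans hv (simEq_symm hw)) (simEq_symm hxw)
    exact hne ((hx.le (simEq_symm hxw) : zpowers w = zpowers x).trans (hx.le hvx).symm)
  · have hwc : w ∈ zpowers c := zpowers_le.1 hc.le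
    have hvc : v ∈ zpowers c := zpowers_le.1 (show c ∈ cycAbove v by rw [hUv, ← hUw]; exact hc).le
    have hpq : orderOf w ≠ orderOf v := fun h => hne (zpowers_eq_of_orderOf_eq hwc hvc h)
    obtain ⟨hwv, hw_lt, hv_lt⟩ := orderOf_mul_eq_and_mem_cycBelow_mul hwc hvc hp hq hpq
    obtain ⟨u, hxu, hπu⟩ : w * v ∈ π '' cycAbove x := by
      rw [image_cycAbove hπ, ← hUw]; exact hw_lt
    have hlt := orderOf_add_one_lt_of_typeI_apply hπ hxp hxu (hπu ▸ typeI_mul hw_lt hv_lt)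
      hp hq hpq (hπu ▸ hwv)
    have hle := orderOf_add_totient_le hπ hx hw hv hne
    rw [Nat.totient_prime hq] at hle
    have := hq.two_le
    omega

lemma zpowers_eq_of_simEq_apply (hπ : π ∈ DRPAut G) {x w v : G} (hx : TypeI G x)
    (hw : simEq G w (π x)) (hv : simEq G v (π x)) : zpowers w = zpowers v := by
  by_contra hne
  have hO : cycBelow w = cycBelow v := (simEq_iff.1 hw).1.trans (simEq_iff.1 hv).1.symm
  obtain ⟨p, k, hp, hk, hpk⟩ := (isPrimePow_nat_iff _).1 (isPrimePow_orderOf_of_cycBelow_eq hO hne)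
  rcases k with _ | _ | k
  · exact lt_irrefl 0 hk
  · exact hne (zpowers_eq_of_simEq_apply_of_orderOf_prime hπ hx hw hv (by rwa [← hpk, pow_one]))
  · have hle := orderOf_le_of_image_cycBelow_eq hπ hp hpk.symm
      (by rw [image_cycBelow hπ, (simEq_iff.1 hw).1])
    have hlt := orderOf_add_totient_le hπ hx hw hv hne
    have := Nat.totient_pos.2 (orderOf_pos v)
    omega

end DRPAut

end Finite

end ReducedPowerGraph

open ReducedPowerGraph in
/-- if `x̂` is of Type I and `π` is an automorphism of `→RP(G)`, then the
`≃`-class of `x^π` is also of Type I and `o(x^π) = o(x)`. -/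
theorem aut_DRP_typeI {G : Type*} [Group G] [Fintype G]
    (π : Equiv.Perm G) (hπ : π ∈ DRPAut G) (x : G) (hT : TypeI G x) :
    TypeI G (π x) ∧ orderOf (π x) = orderOf x := by
  have hTπ : TypeI G (π x) :=
    typeI_iff.2 fun _ hy => zpowers_eq_of_simEq_apply hπ hT hy fun _ => Iff.rfl
  exact ⟨hTπ, orderOf_apply_eq_of_typeI hπ hT hTπ⟩
end
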